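/- For all integers n ≥ 1 and all k ≥ 0, the coefficients P_{j,k,m} satisfy the recursions P_{0,k,2n+1} = (n+k+1)·P_{0,k,2n} + P_{1,k−1,2n} + (n−k+1)·P_{0,k−1,2n} and P_{1,k,2n+1} = (n+k+1)·P_{1,k,2n} + (n−k)·P_{1,k−1,2n}, where by convention P_{j,−1,m} = 0. -/

import Mathlib

namespace DescentParity

/-- Number of descent positions i (1-indexed adjacent pairs) of a permutation of {1,…,m}
    whose first (larger) entry is even. Entries of `Fin m` represent values via `(·:ℕ)+1`. -/
def desBegE (m : ℕ) (σ : Equiv.Perm (Fin m)) : ℕ :=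
  (Finset.univ.filter (fun p : Fin m × Fin m =>
    (p.2 : ℕ) = (p.1 : ℕ) + 1 ∧ σ p.2 < σ p.1 ∧ Even ((σ p.1 : ℕ) + 1))).card

def desEndE (m : ℕ) (σ : Equiv.Perm (Fin m)) : ℕ :=
  (Finset.univ.filter (fun p : Fin m × Fin m =>
    (p.2 : ℕ) = (p.1 : ℕ) + 1 ∧ σ p.2 < σ p.1 ∧ Even ((σ p.2 : ℕ) + 1))).card

def desBegO (m : ℕ) (σ : Equiv.Perm (Fin m)) : ℕ :=
  (Finset.univ.filter (fun p : Fin m × Fin m =>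
    (p.2 : ℕ) = (p.1 : ℕ) + 1 ∧ σ p.2 < σ p.1 ∧ Odd ((σ p.1 : ℕ) + 1))).card

def desEndO (m : ℕ) (σ : Equiv.Perm (Fin m)) : ℕ :=
  (Finset.univ.filter (fun p : Fin m × Fin m =>
    (p.2 : ℕ) = (p.1 : ℕ) + 1 ∧ σ p.2 < σ p.1 ∧ Odd ((σ p.2 : ℕ) + 1))).card

/-- The first entry σ₁ of the permutation is even. -/
def firstEven (m : ℕ) (σ : Equiv.Perm (Fin m)) : Prop :=
  ∃ i : Fin m, (i : ℕ) = 0 ∧ Even ((σ i : ℕ) + 1)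

def firstOdd (m : ℕ) (σ : Equiv.Perm (Fin m)) : Prop :=
  ∃ i : Fin m, (i : ℕ) = 0 ∧ Odd ((σ i : ℕ) + 1)

instance (m : ℕ) (σ : Equiv.Perm (Fin m)) : Decidable (firstEven m σ) := by
  unfold firstEven; infer_instance

instance (m : ℕ) (σ : Equiv.Perm (Fin m)) : Decidable (firstOdd m σ) := by
  unfold firstOdd; infer_instance

def R (k m : ℕ) : ℕ :=
  (Finset.univ.filter (fun σ : Equiv.Perm (Fin m) => desBegE m σ = k)).card

def M (k m : ℕ) : ℕ :=
  (Finset.univ.filter (fun σ : Equiv.Perm (Fin m) => desBegO m σ = k)).card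

def P0 (k m : ℕ) : ℕ :=
  (Finset.univ.filter (fun σ : Equiv.Perm (Fin m) => firstOdd m σ ∧ desEndE m σ = k)).card

def P1 (k m : ℕ) : ℕ :=
  (Finset.univ.filter (fun σ : Equiv.Perm (Fin m) => firstEven m σ ∧ desEndE m σ = k)).card

def Q0 (k m : ℕ) : ℕ :=
  (Finset.univ.filter (fun σ : Equiv.Perm (Fin m) => firstEven m σ ∧ desEndO m σ = k)).card

def Q1 (k m : ℕ) : ℕ :=
  (Finset.univ.filter (fun σ : Equiv.Perm (Fin m) => firstOdd m σ ∧ desEndO m σ = k)).card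

/-!
Every permutation of `{1, …, 2n+1}` arises exactly once by inserting the maximum `2n+1` into a
permutation `τ` of `{1, …, 2n}`. The maximum is never the bottom of a descent and makes the entry
after it one, so the number of even descent bottoms goes up by one exactly when `2n+1` is put just
before an even entry of `τ` that was not a descent bottom, and is unchanged otherwise. If `τ` has
`d` even descent bottoms, that gives `n - d` slots of the first kind and `n + d + 1` of the second.
Since `2n+1` is odd, the new first entry is odd iff the maximum goes in front or `τ` already began
odd; when `τ` begins even, the front slot is one of the `n - d`, which yields the term
`P_{1,k-1,2n}` and the coefficient `n - k` instead of `n - k + 1`.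
-/

open Finset Equiv

section Insertion

variable {m : ℕ}

/-- `j - 1`, except that `0` is sent to itself; `τ j < τ (prevIdx j)` therefore already forces
`j ≠ 0`. -/
def prevIdx (j : Fin m) : Fin m := ⟨j - 1, lt_of_le_of_lt (Nat.sub_le _ _) j.2⟩

lemma prevIdx_zero [NeZero m] : prevIdx (0 : Fin m) = 0 := Fin.ext (by simp [prevIdx])

def evenDescentBottoms (τ : Perm (Fin m)) : Finset (Fin m) :=
  univ.filter fun j => τ j < τ (prevIdx j) ∧ Even ((τ j : ℕ) + 1)

def evenIndices (τ : Perm (Fin m)) : Finset (Fin m) :=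
  univ.filter fun i => Even ((τ i : ℕ) + 1)

def freeEvenIndices (τ : Perm (Fin m)) : Finset (Fin m) :=
  evenIndices τ \ evenDescentBottoms τ

lemma desEndE_eq_card_evenDescentBottoms (τ : Perm (Fin m)) :
    desEndE m τ = #(evenDescentBottoms τ) := by
  refine card_nbij' Prod.snd (fun j => (prevIdx j, j)) ?_ ?_ ?_ ?_
  · rintro ⟨i, j⟩ hij
    simp only [coe_filter, mem_univ, true_and, Set.mem_ofPred_eq, evenDescentBottoms] at hij ⊢
    have : prevIdx j = i := Fin.ext (by simp [prevIdx, hij.1])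
    exact this ▸ hij.2
  · intro j hj
    simp only [coe_filter, mem_univ, true_and, Set.mem_ofPred_eq, evenDescentBottoms] at hj ⊢
    have : (j : ℕ) ≠ 0 := fun h0 => (lt_irrefl (τ j)) (by
      rw [show prevIdx j = j from Fin.ext (by simp [prevIdx, h0])] at hj; exact hj.1)
    exact ⟨by simp [prevIdx]; omega, hj⟩
  · rintro ⟨i, j⟩ hij
    simp only [coe_filter, mem_univ, true_and, Set.mem_ofPred_eq] at hij
    exact Prod.ext (Fin.ext (by simp [prevIdx, hij.1])) rfl
  · intro j _
    rfl

lemma evenDescentBottoms_subset_evenIndices (τ : Perm (Fin m)) :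
    evenDescentBottoms τ ⊆ evenIndices τ :=
  fun _ h => by simp_all [evenDescentBottoms, evenIndices]

lemma card_evenIndices (τ : Perm (Fin m)) :
    #(evenIndices τ) = #(univ.filter fun v : Fin m => Even ((v : ℕ) + 1)) := by
  simp only [evenIndices, card_filter]
  exact Equiv.sum_comp τ fun v => if Even ((v : ℕ) + 1) then 1 else 0

lemma card_filter_even_succ_two_mul (n : ℕ) :
    #(univ.filter fun v : Fin (2 * n) => Even ((v : ℕ) + 1)) = n := by
  rw [card_filter, Fin.sum_univ_eq_sum_range (fun v => if Even (v + 1) then 1 else 0)]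
  induction n with
  | zero => rfl
  | succ n ih =>
    rw [show 2 * (n + 1) = 2 * n + 1 + 1 by ring, sum_range_succ, sum_range_succ, ih]
    simp [parity_simps]

lemma card_freeEvenIndices {n : ℕ} (τ : Perm (Fin (2 * n))) :
    (#(freeEvenIndices τ) : ℤ) = n - desEndE (2 * n) τ := by
  rw [freeEvenIndices, card_sdiff_of_subset (evenDescentBottoms_subset_evenIndices τ),
    card_evenIndices, card_filter_even_succ_two_mul, desEndE_eq_card_evenDescentBottoms,
    Nat.cast_sub]
  simpa [card_evenIndices, card_filter_even_succ_two_mul] using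
    card_le_card (evenDescentBottoms_subset_evenIndices τ)

def insertMax (p : Fin (m + 1)) (τ : Perm (Fin m)) : Perm (Fin (m + 1)) :=
  (finSuccEquiv' p).trans ((Equiv.optionCongr τ).trans finSuccEquivLast.symm)

@[simp]
lemma insertMax_self (p : Fin (m + 1)) (τ : Perm (Fin m)) : insertMax p τ p = Fin.last m := by
  simp [insertMax]

@[simp]
lemma insertMax_succAbove (p : Fin (m + 1)) (τ : Perm (Fin m)) (i : Fin m) :
    insertMax p τ (p.succAbove i) = (τ i).castSucc := by
  simp [insertMax, finSuccEquivLast_symm_some]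

lemma insertMax_injective :
    Function.Injective fun x : Fin (m + 1) × Perm (Fin m) => insertMax x.1 x.2 := by
  rintro ⟨p, τ⟩ ⟨p', τ'⟩ h
  simp only at h
  obtain rfl : p = p' := by
    by_contra hne
    obtain ⟨i, rfl⟩ := Fin.exists_succAbove_eq hne
    have := congrArg (· (p'.succAbove i)) h
    simp only [insertMax_succAbove, insertMax_self] at this
    exact (Fin.castSucc_lt_last _).ne' this
  have : τ = τ' := Equiv.ext fun i =>
    Fin.castSucc_injective _ (by simpa using congrArg (· (p.succAbove i)) h)
  rw [this]

lemma insertMax_bijective :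
    Function.Bijective fun x : Fin (m + 1) × Perm (Fin m) => insertMax x.1 x.2 := by
  rw [Fintype.bijective_iff_injective_and_card]
  exact ⟨insertMax_injective, by simp [Fintype.card_perm, Nat.factorial_succ]⟩

lemma card_filter_perm_succ (P : Perm (Fin (m + 1)) → Prop) [DecidablePred P] :
    #(univ.filter P) = ∑ τ : Perm (Fin m), #(univ.filter fun p => P (insertMax p τ)) := by
  simp only [card_filter]
  rw [← (Equiv.ofBijective _ insertMax_bijective).sum_comp, Fintype.sum_prod_type_right]
  rfl

lemma prevIdx_succAbove (p : Fin (m + 1)) (i : Fin m) :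
    prevIdx (p.succAbove i) = if i.castSucc = p then p else p.succAbove (prevIdx i) := by
  simp only [Fin.succAbove, Fin.ext_iff, Fin.lt_def, prevIdx]
  split_ifs <;> simp only [Fin.val_castSucc, Fin.val_succ] at * <;> omega

lemma insertMax_prevIdx_succAbove (p : Fin (m + 1)) (τ : Perm (Fin m)) (i : Fin m) :
    insertMax p τ (prevIdx (p.succAbove i)) =
      if i.castSucc = p then Fin.last m else (τ (prevIdx i)).castSucc := by
  rw [prevIdx_succAbove]
  split_ifs <;> simp

lemma succAbove_mem_evenDescentBottoms_insertMax (p : Fin (m + 1)) (τ : Perm (Fin m))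
    (i : Fin m) :
    p.succAbove i ∈ evenDescentBottoms (insertMax p τ) ↔
      i ∈ evenDescentBottoms τ ∨ (i.castSucc = p ∧ i ∈ evenIndices τ) := by
  simp only [evenDescentBottoms, evenIndices, mem_filter, mem_univ, true_and,
    insertMax_succAbove, insertMax_prevIdx_succAbove, Fin.val_castSucc]
  split_ifs with h
  · simp [Fin.castSucc_lt_last, h]
  · simp [h]

lemma evenDescentBottoms_insertMax (p : Fin (m + 1)) (τ : Perm (Fin m)) :
    evenDescentBottoms (insertMax p τ) =
      (evenDescentBottoms τ ∪ (evenIndices τ).filter (Fin.castSucc · = p)).map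
        p.succAboveEmb := by
  ext j
  rcases eq_or_ne j p with rfl | hj
  · simp [evenDescentBottoms, Fin.succAbove_ne, not_lt.mpr (Fin.le_last _)]
  · obtain ⟨i, rfl⟩ := Fin.exists_succAbove_eq hj
    simp [succAbove_mem_evenDescentBottoms_insertMax, and_comm]

def newDescentSlots (τ : Perm (Fin m)) : Finset (Fin (m + 1)) :=
  (freeEvenIndices τ).map Fin.castSuccEmb

lemma desEndE_insertMax (p : Fin (m + 1)) (τ : Perm (Fin m)) :
    desEndE (m + 1) (insertMax p τ) =
      desEndE m τ + if p ∈ newDescentSlots τ then 1 else 0 := by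
  have hunion : evenDescentBottoms τ ∪ (evenIndices τ).filter (Fin.castSucc · = p) =
      evenDescentBottoms τ ∪ (freeEvenIndices τ).filter (Fin.castSucc · = p) := by
    ext i
    simp only [freeEvenIndices, mem_union, mem_filter, mem_sdiff]
    tauto
  rw [desEndE_eq_card_evenDescentBottoms, desEndE_eq_card_evenDescentBottoms,
    evenDescentBottoms_insertMax, card_map, hunion,
    card_union_of_disjoint ((disjoint_sdiff (s := evenDescentBottoms τ)).mono_right
      (filter_subset _ (freeEvenIndices τ)))]
  have hslot : ((freeEvenIndices τ).filter (Fin.castSucc · = p)).map Fin.castSuccEmb =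
      (newDescentSlots τ).filter (· = p) := by
    rw [newDescentSlots, filter_map]
    rfl
  rw [← card_map Fin.castSuccEmb (s := (freeEvenIndices τ).filter _), hslot, filter_eq']
  split_ifs <;> simp

end Insertion

section FirstEntry

variable {m : ℕ} [NeZero m]

lemma firstOdd_iff (σ : Perm (Fin m)) : firstOdd m σ ↔ Odd ((σ 0 : ℕ) + 1) :=
  ⟨fun ⟨i, hi, h⟩ => (Fin.ext hi : i = 0) ▸ h, fun h => ⟨0, Fin.val_zero m, h⟩⟩

lemma firstEven_iff_not_firstOdd (σ : Perm (Fin m)) : firstEven m σ ↔ ¬ firstOdd m σ := by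
  rw [firstOdd_iff, Nat.not_odd_iff_even]
  exact ⟨fun ⟨i, hi, h⟩ => (Fin.ext hi : i = 0) ▸ h, fun h => ⟨0, Fin.val_zero m, h⟩⟩

lemma firstOdd_insertMax (hm : Even m) (p : Fin (m + 1)) (τ : Perm (Fin m)) :
    firstOdd (m + 1) (insertMax p τ) ↔ p = 0 ∨ firstOdd m τ := by
  rw [firstOdd_iff, firstOdd_iff]
  rcases eq_or_ne p 0 with rfl | hp
  · simpa using hm.add_one
  · rw [← Fin.succAbove_ne_zero_zero hp, insertMax_succAbove]
    simp [hp]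

lemma zero_mem_newDescentSlots {τ : Perm (Fin m)} (hτ : ¬ firstOdd m τ) :
    0 ∈ newDescentSlots τ := by
  rw [firstOdd_iff, Nat.not_odd_iff_even] at hτ
  simp only [newDescentSlots, mem_map]
  refine ⟨0, ?_, Fin.castSucc_zero⟩
  simp [freeEvenIndices, evenIndices, evenDescentBottoms, hτ, prevIdx_zero]

end FirstEntry

lemma card_filter_add_indicator_eq {α : Type*} [Fintype α] [DecidableEq α] (s : Finset α)
    (d k : ℕ) :
    (#(univ.filter fun a => d + (if a ∈ s then 1 else 0) = k) : ℤ) =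
      (if d = k then (Fintype.card α - #s : ℤ) else 0) +
        (if d + 1 = k then (#s : ℤ) else 0) := by
  by_cases hdk : d = k
  · have : univ.filter (fun a => d + (if a ∈ s then 1 else 0) = k) = sᶜ := by
      ext a
      by_cases a ∈ s <;> simp [*]
    rw [this, card_compl, Nat.cast_sub (card_le_univ s)]
    simp [hdk]
  · by_cases hdk' : d + 1 = k
    · have : univ.filter (fun a => d + (if a ∈ s then 1 else 0) = k) = s := by
        ext a
        by_cases a ∈ s <;> simp [*]
      simp [this, hdk, hdk']
    · have : univ.filter (fun a => d + (if a ∈ s then 1 else 0) = k) = ∅ :=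
        filter_eq_empty_iff.2 fun a _ => by split_ifs <;> omega
      simp [this, hdk, hdk']

lemma card_filter_firstEven_insertMax {m : ℕ} (τ : Perm (Fin m)) (k : ℕ) :
    (#(univ.filter fun p =>
        firstEven (m + 1) (insertMax p τ) ∧ desEndE (m + 1) (insertMax p τ) = k) : ℤ) =
      (#(univ.filter fun p => desEndE (m + 1) (insertMax p τ) = k) : ℤ) -
        #(univ.filter fun p =>
          firstOdd (m + 1) (insertMax p τ) ∧ desEndE (m + 1) (insertMax p τ) = k) := by
  simp only [natCast_card_filter, ← sum_sub_distrib, firstEven_iff_not_firstOdd]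
  refine sum_congr rfl fun p _ => ?_
  split_ifs <;> simp_all

section Counting

variable {n : ℕ}

lemma card_filter_desEndE_insertMax (τ : Perm (Fin (2 * n))) (k : ℕ) :
    (#(univ.filter fun p => desEndE (2 * n + 1) (insertMax p τ) = k) : ℤ) =
      (if desEndE (2 * n) τ = k then (n + k + 1 : ℤ) else 0) +
        (if desEndE (2 * n) τ + 1 = k then (n - k + 1 : ℤ) else 0) := by
  simp_rw [desEndE_insertMax]
  rw [card_filter_add_indicator_eq, Fintype.card_fin, newDescentSlots, card_map,
    card_freeEvenIndices]
  split_ifs <;> push_cast <;> omega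

variable [NeZero n]

lemma card_filter_firstOdd_insertMax (τ : Perm (Fin (2 * n))) (k : ℕ) :
    (#(univ.filter fun p =>
        firstOdd (2 * n + 1) (insertMax p τ) ∧ desEndE (2 * n + 1) (insertMax p τ) = k) : ℤ) =
      if firstOdd (2 * n) τ then
        (#(univ.filter fun p => desEndE (2 * n + 1) (insertMax p τ) = k) : ℤ)
      else if desEndE (2 * n) τ + 1 = k then 1 else 0 := by
  simp only [firstOdd_insertMax (even_two_mul n)]
  split_ifs with hτ hk
  · simp [hτ]
  all_goals
    simp [natCast_card_filter, ite_and, desEndE_insertMax, zero_mem_newDescentSlots hτ, hτ, hk]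

end Counting

lemma natCast_card_filter_and_add_one_eq {α : Type*} (s : Finset α) (Q : α → Prop)
    [DecidablePred Q] (f : α → ℕ) (k : ℕ) :
    (if k = 0 then 0 else (#(s.filter fun x => Q x ∧ f x = k - 1) : ℤ)) =
      ∑ x ∈ s, if Q x ∧ f x + 1 = k then 1 else 0 := by
  rcases k with _ | k
  · simp
  · rw [if_neg k.succ_ne_zero, natCast_card_filter]
    simp only [Nat.add_sub_cancel, Nat.add_right_cancel_iff]

lemma P1_eq_card_filter_not_firstOdd {m : ℕ} [NeZero m] (k : ℕ) :
    P1 k m = #(univ.filter fun σ : Perm (Fin m) => ¬ firstOdd m σ ∧ desEndE m σ = k) := by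
  simp only [P1, firstEven_iff_not_firstOdd]

theorem P0_two_mul_add_one (n k : ℕ) [NeZero n] :
    (P0 k (2 * n + 1) : ℤ) = ((n : ℤ) + k + 1) * P0 k (2 * n)
        + (if k = 0 then 0 else (P1 (k - 1) (2 * n) : ℤ))
        + ((n : ℤ) - k + 1) * (if k = 0 then 0 else (P0 (k - 1) (2 * n) : ℤ)) := by
  rw [P0, P0, P0, P1_eq_card_filter_not_firstOdd, card_filter_perm_succ,
    natCast_card_filter_and_add_one_eq, natCast_card_filter_and_add_one_eq, natCast_card_filter,
    Nat.cast_sum, mul_sum, mul_sum, ← sum_add_distrib, ← sum_add_distrib]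
  refine sum_congr rfl fun τ _ => ?_
  rw [card_filter_firstOdd_insertMax, card_filter_desEndE_insertMax]
  by_cases hτ : firstOdd (2 * n) τ <;>
    simp only [hτ, true_and, false_and, not_true, not_false_eq_true, if_true, if_false] <;>
    split_ifs <;> omega

theorem P1_two_mul_add_one (n k : ℕ) [NeZero n] :
    (P1 k (2 * n + 1) : ℤ) = ((n : ℤ) + k + 1) * P1 k (2 * n)
        + ((n : ℤ) - k) * (if k = 0 then 0 else (P1 (k - 1) (2 * n) : ℤ)) := by
  rw [P1, card_filter_perm_succ, P1_eq_card_filter_not_firstOdd,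
    P1_eq_card_filter_not_firstOdd, natCast_card_filter_and_add_one_eq, natCast_card_filter,
    Nat.cast_sum, mul_sum, mul_sum, ← sum_add_distrib]
  refine sum_congr rfl fun τ _ => ?_
  rw [card_filter_firstEven_insertMax, card_filter_firstOdd_insertMax,
    card_filter_desEndE_insertMax]
  by_cases hτ : firstOdd (2 * n) τ <;>
    simp only [hτ, true_and, false_and, not_true, not_false_eq_true, if_true, if_false] <;>
    split_ifs <;> omega

theorem stmt_5 (n k : ℕ) (hn : 1 ≤ n) :
    (P0 k (2*n+1) : ℤ) = ((n : ℤ) + k + 1) * P0 k (2*n)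
        + (if k = 0 then 0 else (P1 (k-1) (2*n) : ℤ))
        + ((n : ℤ) - k + 1) * (if k = 0 then 0 else (P0 (k-1) (2*n) : ℤ)) ∧
    (P1 k (2*n+1) : ℤ) = ((n : ℤ) + k + 1) * P1 k (2*n)
        + ((n : ℤ) - k) * (if k = 0 then 0 else (P1 (k-1) (2*n) : ℤ)) := by
  have : NeZero n := ⟨by omega⟩
  exact ⟨P0_two_mul_add_one n k, P1_two_mul_add_one n k⟩

end DescentParity
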